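/- arXiv:2511.15233 — 2 statements merged into one kernel-verified Lean document; each statement's English description precedes it below -/
import Mathlib

section
/- For all real numbers k and l with N(k−l,l) ≠ 0, the multiplier m removes the quadratic nonlinearity: m(k−l,l) · [ (κ − μ|k|^α)k − κ(k−l)(1+ν|k|^α)/(1+ν|k−l|^α) − κl(1+ν|k|^α)/(1+ν|l|^α) + μ|k−l|^α(k−l)(1+ν|k|^α)/(1+ν|k−l|^α) + μ|l|^α l (1+ν|k|^α)/(1+ν|l|^α) ] = (1/2)λk. -/
/-- The denominator `N(p,q)` of the multiplier of the normal form transformation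
of the fractional KdV-BBM equation. -/
noncomputable def fracN (ν α p q : ℝ) : ℝ :=
  (p + q) * (1 + ν * |q| ^ α) * (|p| ^ α - |p + q| ^ α)
    + q * (1 + ν * |p + q| ^ α) * (|q| ^ α - |p| ^ α)

/-- The multiplier `m(p,q)` of the normal form transformation of the fractional
KdV-BBM equation. -/
noncomputable def fracM (κ μ lam ν α p q : ℝ) : ℝ :=
  lam * (p + q) * (1 + ν * |p| ^ α) * (1 + ν * |q| ^ α) /
    (2 * (κ * ν + μ) * fracN ν α p q)

noncomputable def fracPhase (κ μ ν α k l : ℝ) : ℝ :=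
  (κ - μ * |k| ^ α) * k
    - κ * (k - l) * (1 + ν * |k| ^ α) / (1 + ν * |k - l| ^ α)
    - κ * l * (1 + ν * |k| ^ α) / (1 + ν * |l| ^ α)
    + μ * |k - l| ^ α * (k - l) * (1 + ν * |k| ^ α) / (1 + ν * |k - l| ^ α)
    + μ * |l| ^ α * l * (1 + ν * |k| ^ α) / (1 + ν * |l| ^ α)

/- Writing `κ - μ|x|^α = κ(1 + ν|x|^α) - (κν + μ)|x|^α`, the `κ`-parts cancel since
`k = (k - l) + l`, and what remains is `(κν + μ)` times the numerator of `N(k - l, l)`. -/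
theorem fracPhase_eq_fracN_div (κ μ ν α k l : ℝ) (hA : 1 + ν * |k - l| ^ α ≠ 0)
    (hB : 1 + ν * |l| ^ α ≠ 0) :
    fracPhase κ μ ν α k l =
      (κ * ν + μ) * fracN ν α (k - l) l / ((1 + ν * |k - l| ^ α) * (1 + ν * |l| ^ α)) := by
  unfold fracPhase fracN
  rw [sub_add_cancel]
  field_simp
  ring

theorem fracM_removes_quadratic_general (κ μ lam ν α : ℝ) (hν : 0 < ν)
    (hκνμ : κ * ν + μ ≠ 0)
    (k l : ℝ) (hN : fracN ν α (k - l) l ≠ 0) :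
    fracM κ μ lam ν α (k - l) l *
      ((κ - μ * |k| ^ α) * k
        - κ * (k - l) * (1 + ν * |k| ^ α) / (1 + ν * |k - l| ^ α)
        - κ * l * (1 + ν * |k| ^ α) / (1 + ν * |l| ^ α)
        + μ * |k - l| ^ α * (k - l) * (1 + ν * |k| ^ α) / (1 + ν * |k - l| ^ α)
        + μ * |l| ^ α * l * (1 + ν * |k| ^ α) / (1 + ν * |l| ^ α))
      = (1 / 2) * lam * k := by
  have hA : 0 < 1 + ν * |k - l| ^ α := by positivity
  have hB : 0 < 1 + ν * |l| ^ α := by positivity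
  change fracM κ μ lam ν α (k - l) l * fracPhase κ μ ν α k l = _
  rw [fracPhase_eq_fracN_div κ μ ν α k l hA.ne' hB.ne', fracM, sub_add_cancel]
  generalize κ * ν + μ = c at hκνμ ⊢
  field_simp

/-- for all `k l` with `N(k−l,l) ≠ 0`, the multiplier `m` removes the
quadratic nonlinearity:
`m(k−l,l)·[(κ−μ|k|^α)k − κ(k−l)(1+ν|k|^α)/(1+ν|k−l|^α) − κl(1+ν|k|^α)/(1+ν|l|^α)
 + μ|k−l|^α(k−l)(1+ν|k|^α)/(1+ν|k−l|^α) + μ|l|^α l(1+ν|k|^α)/(1+ν|l|^α)] = λk/2`. -/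
theorem fracM_removes_quadratic (κ μ lam ν α : ℝ) (hlam : 0 < lam) (hν : 0 < ν)
    (hκνμ : κ * ν + μ ≠ 0) (hα : α ∈ Set.Ioo (0 : ℝ) 1)
    (k l : ℝ) (hN : fracN ν α (k - l) l ≠ 0) :
    fracM κ μ lam ν α (k - l) l *
      ((κ - μ * |k| ^ α) * k
        - κ * (k - l) * (1 + ν * |k| ^ α) / (1 + ν * |k - l| ^ α)
        - κ * l * (1 + ν * |k| ^ α) / (1 + ν * |l| ^ α)
        + μ * |k - l| ^ α * (k - l) * (1 + ν * |k| ^ α) / (1 + ν * |k - l| ^ α)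
        + μ * |l| ^ α * l * (1 + ν * |k| ^ α) / (1 + ν * |l| ^ α))
      = (1 / 2) * lam * k :=
  fracM_removes_quadratic_general κ μ lam ν α hν hκνμ k l hN
end

section
/- There exist constants C₁, C₂ > 0 (depending only on κ, λ, ν, μ, α) such that for all real k, l with k ≠ 0, l ≠ 0, k ≠ l, N(k−l,l) ≠ 0 and (k−l)² + l² ≤ 1, one has C₁ ( |k−l|^{1+α}/|l| + |l|^{1+α}/|k−l| ) ≤ |m(k−l,l)| ≤ C₂ ( |k−l|^{1−α}/|l| + |l|^{1−α}/|k−l| ). -/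
/-!
With `r = -(p + q)` the denominator is `N = Σ p|p|^α - ν Σ p|q|^α|r|^α`, odd and symmetric in
`(p, q, r)`, so for the estimate of `|N|` one may assume `p ≥ q > 0 > r`. There the tangent-line
inequalities for the convex `t ↦ t^(1+α)` and the concave `t ↦ t^α` give
`α q (p+q)^α ≲ |N| ≲ q`: in general `|N|` lies between `α a A^α / 2` and `(4 + 8ν) a`, where `a`
and `A` are the least and greatest of `|p|, |q|, |p + q|`. As `|p + q| / a` is comparable to
`max(|p|,|q|) / min(|p|,|q|)` and the weights `1 + ν|·|^α` lie in `[1, 1 + ν]`, this gives both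
bounds on `|m(p,q)|`.
-/

open Real

section Tangent

variable {x y p : ℝ}

theorem rpow_add_mul_le_add_rpow (hx : 0 < x) (hxy : 0 ≤ x + y) (hp : 1 ≤ p) :
    x ^ p + p * x ^ (p - 1) * y ≤ (x + y) ^ p := by
  have hs : -1 ≤ y / x := by rw [le_div_iff₀ hx]; linarith
  calc x ^ p + p * x ^ (p - 1) * y = (1 + p * (y / x)) * x ^ p := by
        rw [rpow_sub_one hx.ne']; field_simp
    _ ≤ (1 + y / x) ^ p * x ^ p := by
        gcongr
        exact one_add_mul_self_le_rpow_one_add hs hp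
    _ = (x + y) ^ p := by
        rw [← mul_rpow (by linarith) hx.le]
        congr 1
        field_simp

theorem add_rpow_le_rpow_add_mul (hx : 0 < x) (hxy : 0 ≤ x + y) (hp₀ : 0 ≤ p) (hp₁ : p ≤ 1) :
    (x + y) ^ p ≤ x ^ p + p * x ^ (p - 1) * y := by
  have hs : -1 ≤ y / x := by rw [le_div_iff₀ hx]; linarith
  calc (x + y) ^ p = (1 + y / x) ^ p * x ^ p := by
        rw [← mul_rpow (by linarith) hx.le]
        congr 1
        field_simp
    _ ≤ (1 + p * (y / x)) * x ^ p := by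
        gcongr
        exact rpow_one_add_le_one_add_mul_self hs hp₀ hp₁
    _ = x ^ p + p * x ^ (p - 1) * y := by
        rw [rpow_sub_one hx.ne']; field_simp

end Tangent

section Symmetric

variable (ν α : ℝ)

noncomputable def fracNSym (p q r : ℝ) : ℝ :=
  p * |p| ^ α + q * |q| ^ α + r * |r| ^ α
    - ν * (p * |q| ^ α * |r| ^ α + q * |p| ^ α * |r| ^ α + r * |p| ^ α * |q| ^ α)

theorem fracN_eq_fracNSym (p q : ℝ) : fracN ν α p q = fracNSym ν α p q (-(p + q)) := by
  simp only [fracN, fracNSym, abs_neg]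
  ring

theorem fracNSym_comm (p q r : ℝ) : fracNSym ν α p q r = fracNSym ν α q p r := by
  simp only [fracNSym]
  ring

theorem fracNSym_right_comm (p q r : ℝ) : fracNSym ν α p q r = fracNSym ν α p r q := by
  simp only [fracNSym]
  ring

theorem fracNSym_neg (p q r : ℝ) : fracNSym ν α (-p) (-q) (-r) = -fracNSym ν α p q r := by
  simp only [fracNSym, abs_neg]
  ring

theorem neg_fracNSym_of_pos {u v : ℝ} (hu : 0 < u) (hv : 0 < v) :
    -fracNSym ν α u v (-(u + v)) =
      ((u + v) * (u + v) ^ α - u * u ^ α - v * v ^ α)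
        + ν * (u * v ^ α * ((u + v) ^ α - u ^ α) + v * u ^ α * ((u + v) ^ α - v ^ α)) := by
  simp only [fracNSym, abs_neg, abs_of_pos hu, abs_of_pos hv, abs_of_pos (add_pos hu hv)]
  ring

end Symmetric

section Canonical

variable {ν α u v : ℝ}

theorem rpow_le_two_of_le_two {x : ℝ} (hx : 0 ≤ x) (hx2 : x ≤ 2) (hα₀ : 0 ≤ α) (hα₁ : α ≤ 1) :
    x ^ α ≤ 2 :=
  (rpow_le_rpow hx hx2 hα₀).trans (rpow_le_self_of_one_le one_le_two hα₁)

theorem mul_rpow_le_sub_of_le (hu : 0 < u) (hv : 0 < v) (hvu : v ≤ u) (hα₀ : 0 ≤ α) :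
    α * v * u ^ α ≤ (u + v) * (u + v) ^ α - u * u ^ α - v * v ^ α := by
  have tangent := rpow_add_mul_le_add_rpow hu (by linarith : 0 ≤ u + v)
    (by linarith : 1 ≤ 1 + α)
  rw [add_sub_cancel_left, rpow_one_add' hu.le (by linarith),
    rpow_one_add' (by linarith) (by linarith)] at tangent
  have : v * v ^ α ≤ v * u ^ α := by gcongr
  linarith

theorem sub_le_mul_rpow (hu : 0 < u) (hv : 0 < v) (hα₀ : 0 ≤ α) :
    (u + v) * (u + v) ^ α - u * u ^ α ≤ (1 + α) * (u + v) ^ α * v := by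
  have tangent := rpow_add_mul_le_add_rpow (by linarith : 0 < u + v) (by linarith : 0 ≤ u + v + -v)
    (by linarith : 1 ≤ 1 + α)
  rw [add_sub_cancel_left, add_neg_cancel_right, rpow_one_add' hu.le (by linarith),
    rpow_one_add' (by linarith) (by linarith)] at tangent
  linarith

theorem mul_add_rpow_sub_le (hu : 0 < u) (hv : 0 < v) (hα₀ : 0 ≤ α) (hα₁ : α ≤ 1) :
    u * ((u + v) ^ α - u ^ α) ≤ α * u ^ α * v := by
  have tangent := add_rpow_le_rpow_add_mul hu (by linarith : 0 ≤ u + v) hα₀ hα₁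
  rw [rpow_sub_one hu.ne'] at tangent
  calc u * ((u + v) ^ α - u ^ α) ≤ u * (α * (u ^ α / u) * v) := by gcongr; linarith
    _ = α * u ^ α * v := by field_simp

theorem le_two_mul_neg_fracNSym (hν : 0 ≤ ν) (hα₀ : 0 ≤ α) (hα₁ : α ≤ 1) (hu : 0 < u)
    (hv : 0 < v) (hvu : v ≤ u) :
    α * v * (u + v) ^ α ≤ 2 * -fracNSym ν α u v (-(u + v)) := by
  have hQ : 0 ≤ u * v ^ α * ((u + v) ^ α - u ^ α) + v * u ^ α * ((u + v) ^ α - v ^ α) := by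
    have : u ^ α ≤ (u + v) ^ α := by gcongr; linarith
    have : v ^ α ≤ (u + v) ^ α := by gcongr; linarith
    positivity
  have hdouble : (u + v) ^ α ≤ 2 * u ^ α :=
    calc (u + v) ^ α ≤ (2 * u) ^ α := by gcongr; linarith
      _ = 2 ^ α * u ^ α := mul_rpow zero_le_two hu.le
      _ ≤ 2 * u ^ α := by gcongr; exact rpow_le_self_of_one_le one_le_two hα₁
  have := mul_rpow_le_sub_of_le hu hv hvu hα₀
  rw [neg_fracNSym_of_pos ν α hu hv]
  nlinarith [mul_nonneg hν hQ, mul_nonneg (mul_nonneg hα₀ hv.le) (sub_nonneg.2 hdouble)]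

theorem neg_fracNSym_le (hν : 0 ≤ ν) (hα₀ : 0 ≤ α) (hα₁ : α ≤ 1) (hu : 0 < u) (hv : 0 < v)
    (huv : u + v ≤ 2) :
    -fracNSym ν α u v (-(u + v)) ≤ (4 + 8 * ν) * v := by
  have hw : (u + v) ^ α ≤ 2 := rpow_le_two_of_le_two (by linarith) huv hα₀ hα₁
  have hu2 : u ^ α ≤ 2 := rpow_le_two_of_le_two hu.le (by linarith) hα₀ hα₁
  have hv2 : v ^ α ≤ 2 := rpow_le_two_of_le_two hv.le (by linarith) hα₀ hα₁
  have hD : (u + v) * (u + v) ^ α - u * u ^ α - v * v ^ α ≤ 4 * v := by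
    have := sub_le_mul_rpow hu hv hα₀
    have : (1 + α) * (u + v) ^ α * v ≤ 2 * 2 * v := by gcongr; linarith
    have : 0 ≤ v * v ^ α := by positivity
    linarith
  have hQ₁ : u * v ^ α * ((u + v) ^ α - u ^ α) ≤ 4 * v :=
    calc u * v ^ α * ((u + v) ^ α - u ^ α) = v ^ α * (u * ((u + v) ^ α - u ^ α)) := by ring
      _ ≤ v ^ α * (α * u ^ α * v) :=
          mul_le_mul_of_nonneg_left (mul_add_rpow_sub_le hu hv hα₀ hα₁) (by positivity)
      _ ≤ 2 * (1 * 2 * v) := by gcongr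
      _ = 4 * v := by ring
  have hQ₂ : v * u ^ α * ((u + v) ^ α - v ^ α) ≤ 4 * v := by
    have : v ^ α ≤ (u + v) ^ α := by gcongr; linarith
    calc v * u ^ α * ((u + v) ^ α - v ^ α) ≤ v * 2 * 2 := by
          gcongr
          linarith [rpow_nonneg hv.le α]
      _ = 4 * v := by ring
  rw [neg_fracNSym_of_pos ν α hu hv]
  nlinarith [mul_le_mul_of_nonneg_left (add_le_add hQ₁ hQ₂) hν]

end Canonical

section Triple

variable {ν α : ℝ}

theorem abs_fracNSym_bounds (hν : 0 ≤ ν) (hα₀ : 0 ≤ α) (hα₁ : α ≤ 1) {p q r : ℝ}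
    (hp : p ≠ 0) (hq : q ≠ 0) (hr : r ≠ 0) (hsum : p + q + r = 0)
    (hp2 : |p| ≤ 2) (hq2 : |q| ≤ 2) (hr2 : |r| ≤ 2) :
    α * min (min |p| |q|) |r| * max (max |p| |q|) |r| ^ α ≤ 2 * |fracNSym ν α p q r| ∧
      |fracNSym ν α p q r| ≤ (4 + 8 * ν) * min (min |p| |q|) |r| := by
  -- Oddness and symmetry of `fracNSym` reduce to `q ≤ p`, `0 < p`, `0 < q`, `r < 0`.
  wlog hr_neg : r < 0 generalizing p q r with H
  · have := H (neg_ne_zero.2 hp) (neg_ne_zero.2 hq) (neg_ne_zero.2 hr) (by linarith)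
      (by rwa [abs_neg]) (by rwa [abs_neg]) (by rwa [abs_neg])
      (by linarith [lt_of_le_of_ne (not_lt.1 hr_neg) hr.symm])
    simpa only [abs_neg, fracNSym_neg] using this
  wlog hp_pos : 0 < p generalizing p q r with H
  · have hp_neg : p < 0 := lt_of_le_of_ne (not_lt.1 hp_pos) hp
    have := H (neg_ne_zero.2 hp) (neg_ne_zero.2 hr) (neg_ne_zero.2 hq) (by linarith)
      (by rwa [abs_neg]) (by rwa [abs_neg]) (by rwa [abs_neg]) (by linarith) (by linarith)
    rwa [fracNSym_neg, ← fracNSym_right_comm, abs_neg, abs_neg, abs_neg, abs_neg,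
      min_right_comm, max_right_comm] at this
  wlog hq_pos : 0 < q generalizing p q r with H
  · have hq_neg : q < 0 := lt_of_le_of_ne (not_lt.1 hq_pos) hq
    have := H (neg_ne_zero.2 hq) (neg_ne_zero.2 hr) (neg_ne_zero.2 hp) (by linarith)
      (by rwa [abs_neg]) (by rwa [abs_neg]) (by rwa [abs_neg]) (by linarith) (by linarith)
      (by linarith)
    rwa [fracNSym_neg, ← fracNSym_right_comm, ← fracNSym_comm, abs_neg, abs_neg, abs_neg, abs_neg,
      min_right_comm, min_comm |q|, max_right_comm, max_comm |q|] at this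
  wlog hqp : q ≤ p generalizing p q with H
  · have := H hq hp (by linarith) hq2 hp2 hq_pos hp_pos (by linarith)
    rwa [← fracNSym_comm, min_comm |q|, max_comm |q|] at this
  obtain rfl : r = -(p + q) := by linarith
  have hpq := add_pos hp_pos hq_pos
  rw [abs_neg, abs_of_pos hpq] at hr2
  have hlower := le_two_mul_neg_fracNSym hν hα₀ hα₁ hp_pos hq_pos hqp
  have hupper := neg_fracNSym_le hν hα₀ hα₁ hp_pos hq_pos hr2
  have hneg : fracNSym ν α p q (-(p + q)) ≤ 0 := by
    nlinarith [mul_nonneg (mul_nonneg hα₀ hq_pos.le) (rpow_nonneg hpq.le α)]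
  rw [abs_of_nonpos hneg, abs_neg, abs_of_pos hp_pos, abs_of_pos hq_pos, abs_of_pos hpq,
    min_eq_right hqp, min_eq_left (by linarith), max_eq_left hqp, max_eq_right (by linarith)]
  exact ⟨hlower, hupper⟩

theorem abs_fracN_bounds (hν : 0 ≤ ν) (hα₀ : 0 ≤ α) (hα₁ : α ≤ 1) {p q : ℝ}
    (hp : p ≠ 0) (hq : q ≠ 0) (hpq : p + q ≠ 0) (hp1 : |p| ≤ 1) (hq1 : |q| ≤ 1) :
    α * min (min |p| |q|) |p + q| * max |p| |q| ^ α ≤ 2 * |fracN ν α p q| ∧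
      |fracN ν α p q| ≤ (4 + 8 * ν) * min (min |p| |q|) |p + q| := by
  have hpq2 : |-(p + q)| ≤ 2 := by
    rw [abs_neg]
    linarith [abs_add_le p q]
  obtain ⟨hlower, hupper⟩ := abs_fracNSym_bounds hν hα₀ hα₁ hp hq (neg_ne_zero.2 hpq)
    (by ring) (by linarith) (by linarith) hpq2
  rw [abs_neg] at hlower hupper
  rw [fracN_eq_fracNSym]
  refine ⟨le_trans ?_ hlower, hupper⟩
  gcongr _ * ?_ ^ α
  exact le_max_left _ _

end Triple

theorem max_abs_le_abs_add_add_min_abs (p q : ℝ) : max |p| |q| ≤ |p + q| + min |p| |q| := by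
  rcases le_total |p| |q| with h | h
  · rw [max_eq_right h, min_eq_left h]
    simpa using abs_sub (p + q) p
  · rw [max_eq_left h, min_eq_right h]
    simpa using abs_sub (p + q) q

theorem max_abs_div_min_abs_le {p q : ℝ} (hp : p ≠ 0) (hq : q ≠ 0) (hpq : p + q ≠ 0) :
    max |p| |q| / min |p| |q| ≤ 2 * (|p + q| / min (min |p| |q|) |p + q|) := by
  have hb := max_abs_le_abs_add_add_min_abs p q
  rw [← mul_div_assoc, div_le_div_iff₀ (by positivity) (by positivity)]
  rcases le_total (min |p| |q|) |p + q| with h | h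
  · rw [min_eq_left h]
    nlinarith [abs_nonneg p, abs_nonneg q, le_min (abs_nonneg p) (abs_nonneg q)]
  · rw [min_eq_right h]
    nlinarith [abs_nonneg (p + q)]

theorem abs_add_div_min_abs_le {p q : ℝ} (hp : p ≠ 0) (hq : q ≠ 0) (hpq : p + q ≠ 0) :
    |p + q| / min (min |p| |q|) |p + q| ≤ 2 * (max |p| |q| / min |p| |q|) := by
  have hk : |p + q| ≤ 2 * max |p| |q| :=
    (abs_add_le p q).trans (by linarith [le_max_left |p| |q|, le_max_right |p| |q|])
  have hsb : min |p| |q| ≤ max |p| |q| := min_le_max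
  rw [← mul_div_assoc, div_le_div_iff₀ (by positivity) (by positivity)]
  rcases le_total (min |p| |q|) |p + q| with h | h
  · rw [min_eq_left h]
    nlinarith [le_min (abs_nonneg p) (abs_nonneg q)]
  · rw [min_eq_right h]
    nlinarith [abs_nonneg (p + q)]

theorem rpow_div_add_rpow_div_le {x y β : ℝ} (hx : 0 < x) (hy : 0 < y) (hx1 : x ≤ 1)
    (hy1 : y ≤ 1) (hβ : 1 ≤ β) :
    x ^ β / y + y ^ β / x ≤ 2 * (max x y / min x y) := by
  have hxy : x ^ β / y ≤ max x y / min x y :=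
    div_le_div₀ (by positivity) ((rpow_le_self_of_le_one hx.le hx1 hβ).trans (le_max_left x y))
      (by positivity) (min_le_right x y)
  have hyx : y ^ β / x ≤ max x y / min x y :=
    div_le_div₀ (by positivity) ((rpow_le_self_of_le_one hy.le hy1 hβ).trans (le_max_right x y))
      (by positivity) (min_le_left x y)
  linarith

theorem max_rpow_div_min_le {x y : ℝ} (hx : 0 ≤ x) (hy : 0 ≤ y) (γ : ℝ) :
    max x y ^ γ / min x y ≤ x ^ γ / y + y ^ γ / x := by
  rcases le_total x y with h | h
  · rw [max_eq_right h, min_eq_left h]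
    linarith [div_nonneg (rpow_nonneg hx γ) hy]
  · rw [max_eq_left h, min_eq_right h]
    linarith [div_nonneg (rpow_nonneg hy γ) hx]

section Multiplier

variable {κ μ lam ν α : ℝ}

theorem abs_fracM (hlam : 0 ≤ lam) (hν : 0 ≤ ν) (p q : ℝ) :
    |fracM κ μ lam ν α p q| = lam * |p + q| * ((1 + ν * |p| ^ α) * (1 + ν * |q| ^ α)) /
      (2 * |κ * ν + μ| * |fracN ν α p q|) := by
  rw [fracM, abs_div]
  simp only [abs_mul, abs_two, abs_of_nonneg hlam,
    abs_of_nonneg (by positivity : 0 ≤ 1 + ν * |p| ^ α),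
    abs_of_nonneg (by positivity : 0 ≤ 1 + ν * |q| ^ α)]
  ring

theorem le_abs_fracM {p q : ℝ} (hlam : 0 ≤ lam) (hν : 0 ≤ ν) (hα₀ : 0 < α) (hα₁ : α ≤ 1)
    (hκνμ : κ * ν + μ ≠ 0) (hp : p ≠ 0) (hq : q ≠ 0) (hpq : p + q ≠ 0)
    (hp1 : |p| ≤ 1) (hq1 : |q| ≤ 1) :
    lam / (32 * (1 + 2 * ν) * |κ * ν + μ|) * (|p| ^ (1 + α) / |q| + |q| ^ (1 + α) / |p|)
      ≤ |fracM κ μ lam ν α p q| := by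
  obtain ⟨hN_lower, hN_upper⟩ := abs_fracN_bounds hν hα₀.le hα₁ hp hq hpq hp1 hq1
  have hN : 0 < |fracN ν α p q| := by
    have : 0 < α * min (min |p| |q|) |p + q| * max |p| |q| ^ α := by positivity
    linarith
  have hweight : 1 ≤ (1 + ν * |p| ^ α) * (1 + ν * |q| ^ α) :=
    one_le_mul_of_one_le_of_one_le (le_add_of_nonneg_right (by positivity))
      (le_add_of_nonneg_right (by positivity))
  have hsum := rpow_div_add_rpow_div_le (abs_pos.2 hp) (abs_pos.2 hq) hp1 hq1
    (by linarith : (1 : ℝ) ≤ 1 + α)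
  have hratio := max_abs_div_min_abs_le hp hq hpq
  rw [abs_fracM hlam hν]
  calc lam / (32 * (1 + 2 * ν) * |κ * ν + μ|) * (|p| ^ (1 + α) / |q| + |q| ^ (1 + α) / |p|)
      ≤ lam / (32 * (1 + 2 * ν) * |κ * ν + μ|) * (4 * (|p + q| / min (min |p| |q|) |p + q|)) := by
        gcongr
        linarith
    _ = lam * |p + q| / (2 * |κ * ν + μ| * ((4 + 8 * ν) * min (min |p| |q|) |p + q|)) := by
        field_simp
        ring
    _ ≤ lam * |p + q| * ((1 + ν * |p| ^ α) * (1 + ν * |q| ^ α)) /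
          (2 * |κ * ν + μ| * |fracN ν α p q|) :=
        div_le_div₀ (by positivity) (le_mul_of_one_le_right (by positivity) hweight)
          (by positivity) (by gcongr)

theorem abs_fracM_le {p q : ℝ} (hlam : 0 ≤ lam) (hν : 0 ≤ ν) (hα₀ : 0 < α) (hα₁ : α ≤ 1)
    (hκνμ : κ * ν + μ ≠ 0) (hp : p ≠ 0) (hq : q ≠ 0) (hpq : p + q ≠ 0)
    (hp1 : |p| ≤ 1) (hq1 : |q| ≤ 1) :
    |fracM κ μ lam ν α p q| ≤ 2 * lam * (1 + ν) ^ 2 / (α * |κ * ν + μ|)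
      * (|p| ^ (1 - α) / |q| + |q| ^ (1 - α) / |p|) := by
  obtain ⟨hN_lower, -⟩ := abs_fracN_bounds hν hα₀.le hα₁ hp hq hpq hp1 hq1
  have hweight_le (x : ℝ) (hx : |x| ≤ 1) : 1 + ν * |x| ^ α ≤ 1 + ν := by
    have := rpow_le_one (abs_nonneg x) hx hα₀.le
    nlinarith
  have hweight : (1 + ν * |p| ^ α) * (1 + ν * |q| ^ α) ≤ (1 + ν) ^ 2 := by
    rw [sq]
    exact mul_le_mul (hweight_le p hp1) (hweight_le q hq1) (by positivity) (by linarith)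
  have hratio := abs_add_div_min_abs_le hp hq hpq
  have hsum := max_rpow_div_min_le (abs_nonneg p) (abs_nonneg q) (1 - α)
  have hb : 0 < max |p| |q| := lt_max_of_lt_left (abs_pos.2 hp)
  rw [abs_fracM hlam hν]
  calc lam * |p + q| * ((1 + ν * |p| ^ α) * (1 + ν * |q| ^ α)) /
        (2 * |κ * ν + μ| * |fracN ν α p q|)
      ≤ lam * |p + q| * (1 + ν) ^ 2 /
          (|κ * ν + μ| * (α * min (min |p| |q|) |p + q| * max |p| |q| ^ α)) :=
        div_le_div₀ (by positivity) (by gcongr) (by positivity)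
          (by linarith [mul_le_mul_of_nonneg_left hN_lower (abs_nonneg (κ * ν + μ))])
    _ = lam * (1 + ν) ^ 2 / (α * |κ * ν + μ|)
          * (|p + q| / min (min |p| |q|) |p + q|) / max |p| |q| ^ α := by
        field_simp
    _ ≤ lam * (1 + ν) ^ 2 / (α * |κ * ν + μ|)
          * (2 * (max |p| |q| / min |p| |q|)) / max |p| |q| ^ α := by
        gcongr
    _ = 2 * lam * (1 + ν) ^ 2 / (α * |κ * ν + μ|) * (max |p| |q| ^ (1 - α) / min |p| |q|) := by
        rw [rpow_sub hb, rpow_one]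
        field_simp
    _ ≤ 2 * lam * (1 + ν) ^ 2 / (α * |κ * ν + μ|)
          * (|p| ^ (1 - α) / |q| + |q| ^ (1 - α) / |p|) := by
        gcongr

end Multiplier

/-- low-frequency bounds on the multiplier: there are `C₁, C₂ > 0` such that
for all `k, l` with `k ≠ 0`, `l ≠ 0`, `k ≠ l`, `N(k−l,l) ≠ 0` and `(k−l)² + l² ≤ 1`,
`C₁(|k−l|^{1+α}/|l| + |l|^{1+α}/|k−l|) ≤ |m(k−l,l)| ≤ C₂(|k−l|^{1−α}/|l| + |l|^{1−α}/|k−l|)`. -/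
theorem fracM_low_frequency_bounds (κ μ lam ν α : ℝ) (hlam : 0 < lam) (hν : 0 < ν)
    (hκνμ : κ * ν + μ ≠ 0) (hα : α ∈ Set.Ioo (0 : ℝ) 1) :
    ∃ C₁ C₂ : ℝ, 0 < C₁ ∧ 0 < C₂ ∧
      ∀ k l : ℝ, k ≠ 0 → l ≠ 0 → k ≠ l → fracN ν α (k - l) l ≠ 0 →
        (k - l) ^ 2 + l ^ 2 ≤ 1 →
        C₁ * (|k - l| ^ (1 + α) / |l| + |l| ^ (1 + α) / |k - l|)
            ≤ |fracM κ μ lam ν α (k - l) l| ∧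
          |fracM κ μ lam ν α (k - l) l|
            ≤ C₂ * (|k - l| ^ (1 - α) / |l| + |l| ^ (1 - α) / |k - l|) := by
  obtain ⟨hα₀, hα₁⟩ := hα
  refine ⟨lam / (32 * (1 + 2 * ν) * |κ * ν + μ|), 2 * lam * (1 + ν) ^ 2 / (α * |κ * ν + μ|),
    by positivity, by positivity, fun k l hk hl hkl _ hsq => ?_⟩
  have hp : k - l ≠ 0 := sub_ne_zero.2 hkl
  have hpq : k - l + l ≠ 0 := by rwa [sub_add_cancel]
  have hp1 : |k - l| ≤ 1 := (sq_le_one_iff_abs_le_one _).1 (by nlinarith [sq_nonneg l])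
  have hq1 : |l| ≤ 1 := (sq_le_one_iff_abs_le_one _).1 (by nlinarith [sq_nonneg (k - l)])
  exact ⟨le_abs_fracM hlam.le hν.le hα₀ hα₁.le hκνμ hp hl hpq hp1 hq1,
    abs_fracM_le hlam.le hν.le hα₀ hα₁.le hκνμ hp hl hpq hp1 hq1⟩
end
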